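/- With t the sequence t_i = T_{m−i+1} for 1 ≤ i ≤ m and 0 otherwise, the ring homomorphism Ψ : Λ[q][h_1,...,h_{m−p}] → A (where A = Λ[q][e_1(x|t),...,e_p(x|t)] / ⟨h_{m−p+1}(x|t),...,h_m(x|t)+(−1)^p q⟩) sending h_k ↦ h_k(x|t) satisfies Ψ(τ^{−s}h_j) = h_j(x|τ^{−s}t) in A for all s ≥ 0 and j < m, and Ψ(τ^{−(m−1)}h_m) = h_m(x|τ^{−(m−1)}t) + (−1)^p q in A. -/

import Mathlib

open Finset
open scoped Classical

set_option maxSynthPendingDepth 3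
set_option synthInstance.maxHeartbeats 1000000
set_option maxHeartbeats 1000000

noncomputable section

variable {R : Type*} [CommRing R]

/-- shifted sequence: `(τ^s a)_n = a_{n+s}` -/
def shiftSeq (a : ℤ → R) (s : ℤ) : ℤ → R := fun n => a (n + s)

/-- factorial complete homogeneous function `h_k(x|a)`
    (`= Σ_{1≤i_1≤...≤i_k≤p} ∏_r (x_{i_r} - a_{i_r + r - 1})`, `0` for `k < 0`) -/
def fh (p : ℕ) (x : Fin p → R) (a : ℤ → R) (k : ℤ) : R :=
  if 0 ≤ k then
    ∑ f ∈ Finset.univ.filter (fun f : Fin k.toNat → Fin p => Monotone f),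
      ∏ r : Fin k.toNat, (x (f r) - a (((f r : ℕ) : ℤ) + ((r : ℕ) : ℤ) + 1))
  else 0

/-- factorial elementary function `e_k(x|a)`
    (`= Σ_{1≤i_1<...<i_k≤p} ∏_r (x_{i_r} - a_{i_r - r + 1})`, `0` for `k < 0`;
    it vanishes automatically for `k > p`) -/
def fe (p : ℕ) (x : Fin p → R) (a : ℤ → R) (k : ℤ) : R :=
  if 0 ≤ k then
    ∑ f ∈ Finset.univ.filter (fun f : Fin k.toNat → Fin p => StrictMono f),
      ∏ r : Fin k.toNat, (x (f r) - a (((f r : ℕ) : ℤ) - ((r : ℕ) : ℤ) + 1))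
  else 0

/-- generalized factorial power `(y|a)^k = (y - a_1)⋯(y - a_k)` -/
def gfp (y : R) (a : ℤ → R) (k : ℕ) : R :=
  ∏ i ∈ Finset.range k, (y - a ((i : ℤ) + 1))

/-- the factorial Schur polynomial `s_λ(x|a)`, defined through the factorial
    Jacobi-Trudi determinant `det( h_{λ_i - i + j}(x | τ^{1-j} a) )_{1≤i,j≤p}` -/
def fschur (p : ℕ) (lam : Fin p → ℕ) (x : Fin p → R) (a : ℤ → R) : R :=
  Matrix.det (Matrix.of fun i j : Fin p =>
    fh p x (shiftSeq a (-((j : ℕ) : ℤ))) (((lam i : ℕ) : ℤ) - ((i : ℕ) : ℤ) + ((j : ℕ) : ℤ)))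

/-- the sequence `t` with `t_i = T_{m-i+1}` for `1 ≤ i ≤ m` and `t_i = 0` otherwise,
    with `T_1,...,T_m` indeterminates generating `Λ = ℤ[T_1,...,T_m]`. -/
def tseq (m : ℕ) : ℤ → MvPolynomial (Fin m) ℤ := fun i =>
  if h : 1 ≤ i ∧ i ≤ (m : ℤ) then MvPolynomial.X ⟨((m : ℤ) - i).toNat, by omega⟩ else 0

/-- `Λ[q]`, with `q` an indeterminate over `Λ = ℤ[T_1,...,T_m]` -/
abbrev Lq (m : ℕ) := Polynomial (MvPolynomial (Fin m) ℤ)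

/-- `Λ[q][x_1,...,x_p]` -/
abbrev Sx (p m : ℕ) := MvPolynomial (Fin p) (Lq m)

/-- the sequence `t` viewed inside `Λ[q][x_1,...,x_p]` -/
def tq (p m : ℕ) : ℤ → Sx p m := fun i => MvPolynomial.C (Polynomial.C (tseq m i))

/-- the `Λ[q]`-subalgebra `Λ[q][e_1(x|t),...,e_p(x|t)]` of `Λ[q][x_1,...,x_p]` -/
def T0 (p m : ℕ) : Subalgebra (Lq m) (Sx p m) :=
  Algebra.adjoin (Lq m)
    (Set.range fun k : Fin p => fe p MvPolynomial.X (tq p m) (((k : ℕ) : ℤ) + 1))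

/-- the ideal `⟨h_{m-p+1}(x|t), ..., h_{m-1}(x|t), h_m(x|t) + (-1)^p q⟩` of
    `Λ[q][e_1(x|t),...,e_p(x|t)]`  (the membership of the `h_k(x|t)` in this subalgebra
    is supplied as the argument `hh`). -/
def relIdeal (p m : ℕ)
    (hh : ∀ k : ℤ, fh p MvPolynomial.X (tq p m) k ∈ T0 p m) : Ideal (T0 p m) :=
  Ideal.span
    ((Set.range fun k : Fin (p - 1) =>
        (⟨fh p MvPolynomial.X (tq p m) ((m : ℤ) - (p : ℤ) + 1 + (k : ℕ)),
          hh _⟩ : T0 p m)) ∪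
      {(⟨fh p MvPolynomial.X (tq p m) (m : ℤ) +
            algebraMap (Lq m) (Sx p m) ((-1) ^ p * Polynomial.X),
          (T0 p m).add_mem (hh _) ((T0 p m).algebraMap_mem _)⟩ : T0 p m)})

/-- the abstract shifted indeterminates `τ^{-s}h_j` in `Λ[q][h_1,...,h_{m-p}]`:
    `τ^0 h_j = h_j` (with `h_0 = 1` and `h_j = 0` for `j < 0` or `j > m-p`), and
    `τ^{-(s+1)}h_j = τ^{-s}h_j + (t_{j+p-(s+1)} - t_{1-(s+1)})·τ^{-s}h_{j-1}`. -/
def tauh (p m : ℕ) : ℕ → ℤ → MvPolynomial (Fin (m - p)) (Lq m)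
  | 0, j =>
      if h : 1 ≤ j ∧ j ≤ ((m - p : ℕ) : ℤ) then MvPolynomial.X ⟨(j - 1).toNat, by omega⟩
      else if j = 0 then 1 else 0
  | s + 1, j =>
      tauh p m s j +
        MvPolynomial.C (Polynomial.C (tseq m (j + (p : ℤ) - (s : ℤ) - 1) - tseq m (-(s : ℤ)))) *
          tauh p m s (j - 1)

/-- the `Λ[q]`-algebra morphism `Ψ : Λ[q][h_1,...,h_{m-p}] → A` sending `h_k ↦ h_k(x|t)`,
    where `A = Λ[q][e_1(x|t),...,e_p(x|t)] / ⟨h_{m-p+1}(x|t),...,h_m(x|t)+(-1)^p q⟩`. -/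
def psiMap (p m : ℕ)
    (hh : ∀ k : ℤ, fh p MvPolynomial.X (tq p m) k ∈ T0 p m) :
    MvPolynomial (Fin (m - p)) (Lq m) →ₐ[Lq m] (T0 p m ⧸ relIdeal p m hh) :=
  MvPolynomial.aeval fun i : Fin (m - p) =>
    Ideal.Quotient.mk (relIdeal p m hh)
      (⟨fh p MvPolynomial.X (tq p m) (((i : ℕ) : ℤ) + 1), hh _⟩ : T0 p m)

/-! Both `Ψ(τ^{-s}h_j)` and `h_j(x|τ^{-s}t)` satisfy the recursion in `s` that defines
`τ^{-s}h_j`: for the factorial functions it is the identity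
`h_k(x|τ^{-1}a) = h_k(x|a) + (a_{k+p-1} - a_0) h_{k-1}(x|a)`, proved by induction on the number
of variables after splitting off the last one. The recursion at `j` only involves `j` and `j - 1`,
so agreement at `s = 0` for `j < m` (where the relations kill `h_j(x|t)` for `m - p < j < m`)
propagates to every `s`, and the discrepancy `(-1)^p q` at `j = m`, which comes from the relation
`h_m(x|t) + (-1)^p q = 0`, is carried along unchanged. -/

namespace Fin

variable {M : Type*} [AddCommMonoid M]

theorem sum_monotone_of_last_ne {k p : ℕ} (F : (Fin (k + 1) → Fin (p + 1)) → M) :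
    ∑ f ∈ univ.filter (fun f : Fin (k + 1) → Fin (p + 1) =>
        Monotone f ∧ f (last k) ≠ last p), F f =
      ∑ g ∈ univ.filter (fun g : Fin (k + 1) → Fin p => Monotone g), F (castSucc ∘ g) := by
  refine (sum_bij (fun g _ => castSucc ∘ g) ?_ ?_ ?_ ?_).symm
  · intro g hg
    simp only [mem_filter, mem_univ, true_and] at hg ⊢
    exact ⟨strictMono_castSucc.monotone.comp hg, (castSucc_lt_last _).ne⟩
  · intro g₁ _ g₂ _ h
    funext r
    exact castSucc_injective _ (congrFun h r)
  · intro f hf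
    simp only [mem_filter, mem_univ, true_and] at hf
    obtain ⟨hmono, hne⟩ := hf
    have hlt : ∀ r, f r < last p := fun r =>
      (hmono (le_last r)).trans_lt (lt_last_iff_ne_last.2 hne)
    refine ⟨fun r => castPred (f r) (hlt r).ne, ?_, funext fun r => castSucc_castPred _ _⟩
    simp only [mem_filter, mem_univ, true_and]
    exact fun i j hij => castPred_le_castPred_iff.2 (hmono hij)
  · intro g _
    rfl

theorem sum_monotone_of_last_eq {k p : ℕ} (F : (Fin (k + 1) → Fin (p + 1)) → M) :
    ∑ f ∈ univ.filter (fun f : Fin (k + 1) → Fin (p + 1) =>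
        Monotone f ∧ f (last k) = last p), F f =
      ∑ g ∈ univ.filter (fun g : Fin k → Fin (p + 1) => Monotone g), F (snoc g (last p)) := by
  refine (sum_bij (fun g _ => snoc g (last p)) ?_ ?_ ?_ ?_).symm
  · intro g hg
    simp only [mem_filter, mem_univ, true_and] at hg ⊢
    refine ⟨fun i j hij => ?_, snoc_last _ _⟩
    rcases eq_castSucc_or_eq_last j with ⟨j, rfl⟩ | rfl
    · rcases eq_castSucc_or_eq_last i with ⟨i, rfl⟩ | rfl
      · simpa only [snoc_castSucc] using hg (castSucc_le_castSucc_iff.1 hij)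
      · exact absurd hij (not_le.2 (castSucc_lt_last j))
    · simpa only [snoc_last] using le_last _
  · intro g₁ _ g₂ _ h
    funext r
    simpa only [snoc_castSucc] using congrFun h r.castSucc
  · intro f hf
    simp only [mem_filter, mem_univ, true_and] at hf
    obtain ⟨hmono, hlast⟩ := hf
    refine ⟨init f, ?_, by rw [← hlast]; exact snoc_init_self f⟩
    simp only [mem_filter, mem_univ, true_and]
    exact fun i j hij => hmono (castSucc_le_castSucc_iff.2 hij)
  · intro g _
    rfl

theorem sum_monotone_succ {k p : ℕ} (F : (Fin (k + 1) → Fin (p + 1)) → M) :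
    ∑ f ∈ univ.filter (fun f : Fin (k + 1) → Fin (p + 1) => Monotone f), F f =
      ∑ g ∈ univ.filter (fun g : Fin (k + 1) → Fin p => Monotone g), F (castSucc ∘ g) +
        ∑ g ∈ univ.filter (fun g : Fin k → Fin (p + 1) => Monotone g), F (snoc g (last p)) := by
  rw [← sum_filter_add_sum_filter_not _ (fun f => f (last k) = last p), filter_filter,
    filter_filter, sum_monotone_of_last_eq, sum_monotone_of_last_ne, add_comm]

end Fin

theorem shiftSeq_shiftSeq {α : Type*} (a : ℤ → α) (s t : ℤ) :
    shiftSeq (shiftSeq a s) t = shiftSeq a (t + s) := by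
  funext n
  simp only [shiftSeq, add_assoc]

section FactorialComplete

variable (p : ℕ) (a : ℤ → R)

theorem fh_of_neg (x : Fin p → R) {k : ℤ} (hk : k < 0) : fh p x a k = 0 :=
  if_neg (by omega)

theorem fh_natCast (x : Fin p → R) (k : ℕ) :
    fh p x a k = ∑ f ∈ univ.filter (fun f : Fin k → Fin p => Monotone f),
      ∏ r : Fin k, (x (f r) - a (((f r : ℕ) : ℤ) + ((r : ℕ) : ℤ) + 1)) := by
  rw [fh, if_pos (Int.natCast_nonneg k), Int.toNat_natCast]

@[simp]
theorem fh_zero (x : Fin p → R) : fh p x a 0 = 1 := by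
  rw [← Nat.cast_zero, fh_natCast,
    filter_true_of_mem (p := fun f : Fin 0 → Fin p => Monotone f)
      fun f _ => Subsingleton.monotone f]
  simp

theorem fh_zero_vars (x : Fin 0 → R) {k : ℤ} (hk : 0 < k) : fh 0 x a k = 0 := by
  obtain ⟨n, rfl⟩ : ∃ n : ℕ, k = ((n + 1 : ℕ) : ℤ) := ⟨(k - 1).toNat, by omega⟩
  rw [fh_natCast]
  exact sum_eq_zero fun f _ => (f 0).elim0

theorem fh_succ_vars (x : Fin (p + 1) → R) (k : ℤ) :
    fh (p + 1) x a k = fh p (fun i => x i.castSucc) a k +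
      (x (Fin.last p) - a (k + p)) * fh (p + 1) x a (k - 1) := by
  rcases lt_trichotomy k 0 with hk | rfl | hk
  · simp only [fh_of_neg _ _ _ hk, fh_of_neg _ _ _ (show k - 1 < 0 by omega), mul_zero,
      add_zero]
  · rw [fh_of_neg _ _ _ (show (0 : ℤ) - 1 < 0 by omega)]
    simp
  obtain ⟨n, rfl⟩ : ∃ n : ℕ, k = ((n + 1 : ℕ) : ℤ) := ⟨(k - 1).toNat, by omega⟩
  rw [show ((n + 1 : ℕ) : ℤ) - 1 = n by push_cast; ring, fh_natCast, fh_natCast, fh_natCast,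
    Fin.sum_monotone_succ, mul_sum]
  congr 1
  refine sum_congr rfl fun g _ => ?_
  rw [Fin.prod_univ_castSucc, mul_comm]
  simp only [Fin.snoc_castSucc, Fin.snoc_last, Fin.val_castSucc, Fin.val_last]
  push_cast
  ring_nf

theorem fh_shiftSeq_neg_one (x : Fin p → R) (k : ℤ) :
    fh p x (shiftSeq a (-1)) k = fh p x a k + (a (k + p - 1) - a 0) * fh p x a (k - 1) := by
  have fh_neg_one : ∀ {q : ℕ} (y : Fin q → R), fh q y a (-1) = 0 :=
    fun y => fh_of_neg _ _ y (by omega)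
  rcases lt_or_ge k 0 with hk | hk
  · simp only [fh_of_neg _ _ _ hk, fh_of_neg _ _ _ (show k - 1 < 0 by omega), mul_zero,
      add_zero]
  induction p generalizing k with
  | zero =>
    rcases hk.eq_or_lt with rfl | hk
    · simp [fh_neg_one]
    rcases (show 1 ≤ k by omega).eq_or_lt with rfl | hk₁
    · simp [fh_zero_vars]
    · simp only [fh_zero_vars _ _ hk, fh_zero_vars _ _ (show 0 < k - 1 by omega), mul_zero,
        add_zero]
  | succ p ih =>
    induction k, hk using Int.leInduction with
    | base => simp [fh_neg_one]
    | succ k hk ihk =>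
      have split_shift_succ := fh_succ_vars p (shiftSeq a (-1)) x (k + 1)
      have split_succ := fh_succ_vars p a x (k + 1)
      have split := fh_succ_vars p a x k
      have ih_init := ih (fun i => x i.castSucc) (k + 1) (by omega)
      simp only [shiftSeq] at split_shift_succ
      push_cast at ihk ⊢
      ring_nf at split_shift_succ split_succ split ih_init ihk ⊢
      linear_combination split_shift_succ - split_succ + ih_init +
        (x (Fin.last p) - a (k + p)) * ihk - (a (k + p) - a 0) * split

end FactorialComplete

section Recursion

variable {S : Type*} [Semiring S] {c u v : ℕ → ℤ → S} {M : ℤ}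

theorem eq_of_lt_of_recursion (hu : ∀ s j, u (s + 1) j = u s j + c s j * u s (j - 1))
    (hv : ∀ s j, v (s + 1) j = v s j + c s j * v s (j - 1)) (h₀ : ∀ j < M, u 0 j = v 0 j) :
    ∀ s, ∀ j < M, u s j = v s j := by
  intro s
  induction s with
  | zero => exact h₀
  | succ s ih =>
    intro j hj
    rw [hu, hv, ih j hj, ih (j - 1) (by omega)]

theorem eq_add_of_recursion (hu : ∀ s j, u (s + 1) j = u s j + c s j * u s (j - 1))
    (hv : ∀ s j, v (s + 1) j = v s j + c s j * v s (j - 1)) (h₀ : ∀ j < M, u 0 j = v 0 j)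
    {d : S} (hM : u 0 M = v 0 M + d) : ∀ s, u s M = v s M + d := by
  intro s
  induction s with
  | zero => exact hM
  | succ s ih =>
    rw [hu, hv, ih, eq_of_lt_of_recursion hu hv h₀ s (M - 1) (by omega), add_right_comm]

end Recursion

theorem fh_shiftSeq_tq_succ (p m s : ℕ) (j : ℤ) :
    fh p MvPolynomial.X (shiftSeq (tq p m) (-((s + 1 : ℕ) : ℤ))) j =
      fh p MvPolynomial.X (shiftSeq (tq p m) (-(s : ℤ))) j +
        MvPolynomial.C (Polynomial.C (tseq m (j + p - s - 1) - tseq m (-(s : ℤ)))) *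
          fh p MvPolynomial.X (shiftSeq (tq p m) (-(s : ℤ))) (j - 1) := by
  rw [show -((s + 1 : ℕ) : ℤ) = -1 + -(s : ℤ) by push_cast; ring, ← shiftSeq_shiftSeq,
    fh_shiftSeq_neg_one]
  simp only [shiftSeq, tq, map_sub]
  ring_nf

section Quotient

variable {p m : ℕ} (hh : ∀ k : ℤ, fh p MvPolynomial.X (tq p m) k ∈ T0 p m)

theorem psiMap_tauh_succ (s : ℕ) (j : ℤ) :
    psiMap p m hh (tauh p m (s + 1) j) = psiMap p m hh (tauh p m s j) +
      algebraMap (Lq m) _ (Polynomial.C (tseq m (j + p - s - 1) - tseq m (-(s : ℤ)))) *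
        psiMap p m hh (tauh p m s (j - 1)) := by
  rw [tauh, map_add, map_mul, ← MvPolynomial.algebraMap_eq, AlgHom.commutes]

theorem mk_fh_shiftSeq_tq_succ
    (hh2 : ∀ (s : ℕ) (j : ℤ), fh p MvPolynomial.X (shiftSeq (tq p m) (-(s : ℤ))) j ∈ T0 p m)
    (s : ℕ) (j : ℤ) :
    Ideal.Quotient.mk (relIdeal p m hh) ⟨_, hh2 (s + 1) j⟩ =
      Ideal.Quotient.mk (relIdeal p m hh) ⟨_, hh2 s j⟩ +
        algebraMap (Lq m) _ (Polynomial.C (tseq m (j + p - s - 1) - tseq m (-(s : ℤ)))) *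
          Ideal.Quotient.mk (relIdeal p m hh) ⟨_, hh2 s (j - 1)⟩ := by
  rw [← Ideal.Quotient.mk_algebraMap, ← map_mul, ← map_add]
  congr 1
  exact Subtype.ext (fh_shiftSeq_tq_succ p m s j)

theorem mk_fh_tq_eq_zero {j : ℤ} (hj₁ : (m : ℤ) - p < j) (hj₂ : j < m) :
    Ideal.Quotient.mk (relIdeal p m hh) ⟨_, hh j⟩ = 0 := by
  rw [Ideal.Quotient.eq_zero_iff_mem]
  refine Ideal.subset_span (Set.mem_union_left _ ⟨⟨(j - (m - p + 1)).toNat, by omega⟩, ?_⟩)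
  refine Subtype.ext (congrArg (fh p _ _) ?_)
  dsimp only
  omega

theorem mk_fh_tq_top :
    Ideal.Quotient.mk (relIdeal p m hh) ⟨_, hh m⟩ =
      -algebraMap (Lq m) _ ((-1) ^ p * Polynomial.X) := by
  refine eq_neg_of_add_eq_zero_left ?_
  rw [← Ideal.Quotient.mk_algebraMap, ← map_add, Ideal.Quotient.eq_zero_iff_mem]
  exact Ideal.subset_span (Set.mem_union_right _ rfl)

theorem psiMap_tauh_zero {j : ℤ} (hj : j < m) :
    psiMap p m hh (tauh p m 0 j) = Ideal.Quotient.mk (relIdeal p m hh) ⟨_, hh j⟩ := by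
  rw [tauh]
  split_ifs with h₁ h₀
  · rw [psiMap, MvPolynomial.aeval_X]
    congr 3
    dsimp only
    omega
  · subst h₀
    rw [map_one, ← map_one (Ideal.Quotient.mk _)]
    exact congrArg _ (Subtype.ext (fh_zero p _ _).symm)
  · rw [map_zero]
    rcases lt_or_gt_of_ne h₀ with hneg | hpos
    · rw [← map_zero (Ideal.Quotient.mk _)]
      exact congrArg _ (Subtype.ext (fh_of_neg p _ _ hneg).symm)
    · exact (mk_fh_tq_eq_zero hh (by omega) hj).symm

theorem tauh_zero_top (hp : 0 < p) (hm : m ≠ 0) : tauh p m 0 m = 0 := by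
  rw [tauh, dif_neg (by omega), if_neg (by omega)]

end Quotient

/-- `Ψ(τ^{-s}h_j) = h_j(x|τ^{-s}t)` in `A` for all `s ≥ 0` and `j < m`,
    and `Ψ(τ^{-(m-1)}h_m) = h_m(x|τ^{-(m-1)}t) + (-1)^p q` in `A`. -/
theorem psi_tauh (p m : ℕ) (hp : 0 < p) (hpm : p ≤ m)
    (hh : ∀ k : ℤ, fh p MvPolynomial.X (tq p m) k ∈ T0 p m)
    (hh2 : ∀ (s : ℕ) (j : ℤ),
      fh p MvPolynomial.X (shiftSeq (tq p m) (-(s : ℤ))) j ∈ T0 p m) :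
    (∀ (s : ℕ) (j : ℤ), j < (m : ℤ) →
      psiMap p m hh (tauh p m s j) =
        Ideal.Quotient.mk (relIdeal p m hh)
          (⟨fh p MvPolynomial.X (shiftSeq (tq p m) (-(s : ℤ))) j, hh2 s j⟩ : T0 p m)) ∧
    psiMap p m hh (tauh p m (m - 1) (m : ℤ)) =
      Ideal.Quotient.mk (relIdeal p m hh)
        (⟨fh p MvPolynomial.X (shiftSeq (tq p m) (-((m - 1 : ℕ) : ℤ))) (m : ℤ) +
            algebraMap (Lq m) (Sx p m) ((-1) ^ p * Polynomial.X),
          (T0 p m).add_mem (hh2 (m - 1) (m : ℤ)) ((T0 p m).algebraMap_mem _)⟩ : T0 p m) := by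
  have h₀ : ∀ j < (m : ℤ), psiMap p m hh (tauh p m 0 j) =
      Ideal.Quotient.mk (relIdeal p m hh) ⟨_, hh2 0 j⟩ := by
    intro j hj
    rw [psiMap_tauh_zero hh hj]
    congr 3
  have hM : psiMap p m hh (tauh p m 0 m) = Ideal.Quotient.mk (relIdeal p m hh) ⟨_, hh2 0 m⟩ +
      algebraMap (Lq m) _ ((-1) ^ p * Polynomial.X) := by
    rw [tauh_zero_top hp (by omega), map_zero, eq_comm, ← eq_neg_iff_add_eq_zero,
      ← mk_fh_tq_top hh]
    congr 3
  have hu := psiMap_tauh_succ hh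
  have hv := mk_fh_shiftSeq_tq_succ hh hh2
  refine ⟨eq_of_lt_of_recursion hu hv h₀, ?_⟩
  rw [eq_add_of_recursion (u := fun s j => psiMap p m hh (tauh p m s j))
    (v := fun s j => Ideal.Quotient.mk _ ⟨_, hh2 s j⟩) hu hv h₀ hM (m - 1),
    ← Ideal.Quotient.mk_algebraMap, ← map_add]
  rfl
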